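/- For n coprime to a, R(n;a) = (1/φ(a)) · Σ_{χ mod a} conj(χ)(−n) · Σ_{u | n²} χ(u), where the outer sum is over all Dirichlet characters mod a. -/

import Mathlib

/-!
Clearing denominators turns `a / n = 1 / x + 1 / y` into `(a x - n) (a y - n) = n ²`, so
`u = a x - n` identifies the solutions with the divisors `u` of `n ²` such that `u ≡ -n (mod a)`;
the cofactor `n ² / u` then satisfies the same congruence because `n` is invertible mod `a`.
Orthogonality of the Dirichlet characters mod `a` counts these divisors.
-/

open Finset

theorem div_eq_one_div_add_one_div_iff {a n x y : ℕ} (hn : n ≠ 0) (hx : x ≠ 0) (hy : y ≠ 0) :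
    (a : ℚ) / n = 1 / x + 1 / y ↔ a * x * y = n * (x + y) := by
  rw [div_add_div _ _ (by exact_mod_cast hx) (by exact_mod_cast hy),
    div_eq_div_iff (by exact_mod_cast hn) (by positivity)]
  constructor <;> intro h
  · exact_mod_cast (by linear_combination h : (a : ℚ) * x * y = n * (x + y))
  · linear_combination (by exact_mod_cast h : (a : ℚ) * x * y = n * (x + y))

theorem mul_mul_eq_mul_add_iff_sub_mul_sub_eq_sq {R : Type*} [CommRing R] [IsDomain R]
    {a n x y : R} (ha : a ≠ 0) :
    a * x * y = n * (x + y) ↔ (a * x - n) * (a * y - n) = n ^ 2 := by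
  rw [← mul_right_inj' ha, ← sub_eq_zero, ← sub_eq_zero (b := n ^ 2)]
  constructor <;> intro h <;> linear_combination h

theorem lt_mul_of_mul_mul_eq_mul_add {a n x y : ℕ} (hn : 0 < n) (hx : 0 < x)
    (h : a * x * y = n * (x + y)) : n < a * x := by
  nlinarith

theorem sub_mul_sub_eq_sq_of_mul_mul_eq_mul_add {a n x y : ℕ} (hn : 0 < n) (hx : 0 < x)
    (hy : 0 < y) (h : a * x * y = n * (x + y)) : (a * x - n) * (a * y - n) = n ^ 2 := by
  have ha : a ≠ 0 := by rintro rfl; simp at h; omega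
  have hxn := lt_mul_of_mul_mul_eq_mul_add hn hx h
  have hyn := lt_mul_of_mul_mul_eq_mul_add hn hy (by linarith : a * y * x = n * (y + x))
  zify [hxn.le, hyn.le]
  exact (mul_mul_eq_mul_add_iff_sub_mul_sub_eq_sq (by exact_mod_cast ha : (a : ℤ) ≠ 0)).mp
    (by exact_mod_cast h)

theorem mul_mul_eq_mul_add_of_mul_eq_sq {a n u v x y : ℕ} (ha : a ≠ 0) (huv : u * v = n ^ 2)
    (hx : a * x = u + n) (hy : a * y = v + n) : a * x * y = n * (x + y) := by
  have hx' : (a * x - n : ℤ) = u := by rw [sub_eq_iff_eq_add]; exact_mod_cast hx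
  have hy' : (a * y - n : ℤ) = v := by rw [sub_eq_iff_eq_add]; exact_mod_cast hy
  have := (mul_mul_eq_mul_add_iff_sub_mul_sub_eq_sq (x := (x : ℤ)) (y := y)
    (by exact_mod_cast ha : (a : ℤ) ≠ 0)).mpr (by rw [hx', hy']; exact_mod_cast huv)
  exact_mod_cast this

theorem eq_neg_of_eq_neg_of_mul_eq_sq {R : Type*} [CommRing R] {n u v : R} (hn : IsUnit n)
    (hu : u = -n) (h : u * v = n ^ 2) : v = -n :=
  hn.neg.mul_left_cancel (by rw [← hu, h, hu]; ring)

theorem ZMod.natCast_eq_neg_natCast_iff_dvd_add {a u n : ℕ} :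
    (u : ZMod a) = -n ↔ a ∣ u + n := by
  rw [eq_neg_iff_add_eq_zero, ← Nat.cast_add, ZMod.natCast_eq_zero_iff]

def divisorsSqCongrNeg (a n : ℕ) : Finset ℕ :=
  {u ∈ (n ^ 2).divisors | (u : ZMod a) = -n}

theorem mem_divisorsSqCongrNeg {a n u : ℕ} (hn : n ≠ 0) :
    u ∈ divisorsSqCongrNeg a n ↔ u ∣ n ^ 2 ∧ a ∣ u + n := by
  simp [divisorsSqCongrNeg, hn, ZMod.natCast_eq_neg_natCast_iff_dvd_add]

theorem solutions_eq_image_divisorsSqCongrNeg {a n : ℕ} (ha : 0 < a) (hn : 0 < n)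
    (hcop : n.Coprime a) :
    {p : ℕ × ℕ | 0 < p.1 ∧ 0 < p.2 ∧ a * p.1 * p.2 = n * (p.1 + p.2)} =
      (fun u ↦ ((u + n) / a, (n ^ 2 / u + n) / a)) '' divisorsSqCongrNeg a n := by
  ext ⟨x, y⟩
  simp only [Set.mem_ofPred_eq, Set.mem_image, mem_coe, mem_divisorsSqCongrNeg hn.ne']
  constructor
  · rintro ⟨hx, hy, h⟩
    have hxn := lt_mul_of_mul_mul_eq_mul_add hn hx h
    have hyn := lt_mul_of_mul_mul_eq_mul_add hn hy (by linarith : a * y * x = n * (y + x))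
    have hfac := sub_mul_sub_eq_sq_of_mul_mul_eq_mul_add hn hx hy h
    have hcofactor : n ^ 2 / (a * x - n) = a * y - n :=
      Nat.div_eq_of_eq_mul_left (by omega) (by rw [← hfac, mul_comm])
    refine ⟨a * x - n, ⟨Dvd.intro _ hfac, by simp [Nat.sub_add_cancel hxn.le]⟩, ?_⟩
    simp [hcofactor, Nat.sub_add_cancel hxn.le, Nat.sub_add_cancel hyn.le, ha.ne']
  · rintro ⟨u, ⟨hdvd, hau⟩, hfu⟩
    obtain ⟨rfl, rfl⟩ := Prod.mk.inj hfu
    have huv : u * (n ^ 2 / u) = n ^ 2 := Nat.mul_div_cancel' hdvd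
    have hav : a ∣ n ^ 2 / u + n := ZMod.natCast_eq_neg_natCast_iff_dvd_add.mp <|
      eq_neg_of_eq_neg_of_mul_eq_sq ((ZMod.isUnit_iff_coprime n a).mpr hcop)
        (ZMod.natCast_eq_neg_natCast_iff_dvd_add.mpr hau)
        (by exact_mod_cast congrArg (Nat.cast : ℕ → ZMod a) huv)
    exact ⟨Nat.div_pos (Nat.le_of_dvd (by omega) hau) ha,
      Nat.div_pos (Nat.le_of_dvd (Nat.add_pos_right _ hn) hav) ha,
      mul_mul_eq_mul_add_of_mul_eq_sq ha.ne' huv (Nat.mul_div_cancel' hau)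
        (Nat.mul_div_cancel' hav)⟩

theorem card_solutions_eq_card_divisorsSqCongrNeg {a n : ℕ} (ha : 0 < a) (hn : 0 < n)
    (hcop : n.Coprime a) :
    Nat.card {p : ℕ × ℕ | 0 < p.1 ∧ 0 < p.2 ∧ a * p.1 * p.2 = n * (p.1 + p.2)} =
      #(divisorsSqCongrNeg a n) := by
  have hinj : Set.InjOn (fun u ↦ ((u + n) / a, (n ^ 2 / u + n) / a)) (divisorsSqCongrNeg a n) := by
    intro u hu v hv huv
    have hau := ((mem_divisorsSqCongrNeg hn.ne').mp hu).2
    have hav := ((mem_divisorsSqCongrNeg hn.ne').mp hv).2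
    have := congrArg (a * ·.1) huv
    simp only [Nat.mul_div_cancel' hau, Nat.mul_div_cancel' hav] at this
    omega
  rw [solutions_eq_image_divisorsSqCongrNeg ha hn hcop, Nat.card_image_of_injOn hinj,
    Nat.card_coe_set_eq, Set.ncard_coe_finset]

theorem DirichletCharacter.starRingEnd_apply_eq_apply_inv {a : ℕ} (χ : DirichletCharacter ℂ a)
    {b : ZMod a} (hb : IsUnit b) : starRingEnd ℂ (χ b) = χ b⁻¹ := by
  obtain ⟨v, rfl⟩ := hb
  rw [starRingEnd_apply, MulChar.star_apply', MulChar.inv_apply, Ring.inverse_unit,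
    ZMod.inv_coe_unit]

theorem DirichletCharacter.card_filter_natCast_eq {a : ℕ} [NeZero a] (s : Finset ℕ) {b : ZMod a}
    (hb : IsUnit b) :
    (#{u ∈ s | ((u : ℕ) : ZMod a) = b} : ℂ) =
      (a.totient : ℂ)⁻¹ * ∑ χ : DirichletCharacter ℂ a, starRingEnd ℂ (χ b) * ∑ u ∈ s, χ u := by
  have hφ : (a.totient : ℂ) ≠ 0 := by exact_mod_cast (Nat.totient_pos.mpr (NeZero.pos a)).ne'
  rw [eq_inv_mul_iff_mul_eq₀ hφ, natCast_card_filter, mul_sum]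
  simp only [starRingEnd_apply_eq_apply_inv _ hb, mul_sum]
  rw [sum_comm]
  refine sum_congr rfl fun u _ ↦ ?_
  rw [sum_char_inv_mul_char_eq ℂ hb, mul_boole]
  simp only [eq_comm]

/-- For `gcd(n, a) = 1`,
`R(n; a) = (1/φ(a)) Σ_{χ mod a} conj(χ)(-n) Σ_{u ∣ n²} χ(u)`. -/
theorem R_eq_character_sum (a n : ℕ) [NeZero a] (hn : 0 < n) (hcop : Nat.Coprime n a) :
    (Nat.card {p : ℕ × ℕ | 0 < p.1 ∧ 0 < p.2 ∧ (a : ℚ) / n = 1 / p.1 + 1 / p.2} : ℂ) =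
      (Nat.totient a : ℂ)⁻¹ *
        ∑ χ : DirichletCharacter ℂ a,
          (starRingEnd ℂ) (χ (-(n : ZMod a))) * ∑ u ∈ (n ^ 2).divisors, χ u := by
  have hsolutions : {p : ℕ × ℕ | 0 < p.1 ∧ 0 < p.2 ∧ (a : ℚ) / n = 1 / p.1 + 1 / p.2} =
      {p : ℕ × ℕ | 0 < p.1 ∧ 0 < p.2 ∧ a * p.1 * p.2 = n * (p.1 + p.2)} :=
    Set.ext fun _ ↦ and_congr_right fun hx ↦ and_congr_right fun hy ↦
      div_eq_one_div_add_one_div_iff hn.ne' hx.ne' hy.ne'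
  have hunit : IsUnit (-(n : ZMod a)) := ((ZMod.isUnit_iff_coprime n a).mpr hcop).neg
  rw [hsolutions, card_solutions_eq_card_divisorsSqCongrNeg (NeZero.pos a) hn hcop,
    divisorsSqCongrNeg, DirichletCharacter.card_filter_natCast_eq _ hunit]
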